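/- Let G be a finite simple graph with n vertices and clique partition π = {W₁,…,W_r}. For every nonnegative integer k, the number of independent sets of size k in the whisker graph W(G) equals Σ_{ℓ=0}^{k} fℓ · C(n − ℓ, k − ℓ), where fℓ is the number of independent sets of size ℓ in G. Consequently, the number of independent sets of size k in W(G) equals the number of faces of size k of the simplicial join of the independence complex of G^π with the simplex on n − r new vertices. -/

import Mathlib

def cliqueWhisker {V ι : Type*} (G : SimpleGraph V) (p : V → ι) :
    SimpleGraph (V ⊕ ι) :=
  SimpleGraph.fromRel (fun a b =>
    match a, b with
    | Sum.inl u, Sum.inl v => G.Adj u v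
    | Sum.inl u, Sum.inr i => p u = i
    | _, _ => False)

def whiskerGraph {V : Type*} (G : SimpleGraph V) : SimpleGraph (V ⊕ V) :=
  SimpleGraph.fromRel (fun a b =>
    match a, b with
    | Sum.inl u, Sum.inl v => G.Adj u v
    | Sum.inl u, Sum.inr w => u = w
    | _, _ => False)

def IsVertexCover {V : Type*} (G : SimpleGraph V) (C : Set V) : Prop :=
  ∀ ⦃u v : V⦄, G.Adj u v → u ∈ C ∨ v ∈ C

def IsMinVertexCover {V : Type*} (G : SimpleGraph V) (C : Set V) : Prop :=
  IsVertexCover G C ∧ ∀ D ⊆ C, IsVertexCover G D → D = C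

def IsIndep {V : Type*} (G : SimpleGraph V) (A : Set V) : Prop :=
  ∀ u ∈ A, ∀ v ∈ A, ¬ G.Adj u v

/-! An independent set of `cliqueWhisker G p`, with whiskers indexed by `W`, splits into a part
`L ⊆ V` independent in `G` and a part `M ⊆ W` avoiding `p '' L`. If the fibres of `p` are cliques,
`p` is injective on `L`, so for fixed `L` there are `C(|W| - |L|, k - |L|)` choices of `M`.
The whisker graph is the case `p = id`, and the join of `Δ(G^π)` with a simplex on `n - r` vertices
is the case `W = Fin r ⊕ Fin (n - r)`, the extra whiskers being isolated. In both cases `|W| = n`,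
so both counts equal the same sum. -/

open Finset Sum

lemma Finset.sum_filter_le_eq_sum_range {α M : Type*} [AddCommMonoid M] (s : Finset α)
    (f : α → ℕ) (g : ℕ → M) (k : ℕ) :
    ∑ a ∈ s with f a ≤ k, g (f a) = ∑ ℓ ∈ range (k + 1), #{a ∈ s | f a = ℓ} • g ℓ := by
  rw [← sum_fiberwise_of_maps_to (g := f) (t := range (k + 1))
    (fun a ha => by simpa [Nat.lt_succ_iff] using (mem_filter.1 ha).2)]
  refine sum_congr rfl fun ℓ hℓ => ?_
  rw [filter_filter, sum_congr rfl fun a ha => by rw [(mem_filter.1 ha).2.2], sum_const]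
  congr 2
  refine filter_congr fun a _ => ?_
  exact and_iff_right_of_imp fun h => h ▸ Nat.lt_succ_iff.1 (mem_range.1 hℓ)

lemma IsIndep.injOn {V W : Type*} {G : SimpleGraph V} {p : V → W} {A : Set V}
    (hA : IsIndep G A) (hp : ∀ u v, p u = p v → u ≠ v → G.Adj u v) : Set.InjOn p A :=
  fun u hu v hv huv => by_contra fun hne => hA u hu v hv (hp u v huv hne)

section
variable {V W : Type*} (G : SimpleGraph V) (p : V → W)

@[simp] lemma cliqueWhisker_adj_inl_inl {u v : V} :
    (cliqueWhisker G p).Adj (inl u) (inl v) ↔ G.Adj u v := by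
  simp only [cliqueWhisker, SimpleGraph.fromRel_adj, ne_eq, inl.injEq]
  exact ⟨fun ⟨_, h⟩ => h.elim id (·.symm), fun h => ⟨G.ne_of_adj h, .inl h⟩⟩

@[simp] lemma cliqueWhisker_adj_inl_inr {u : V} {w : W} :
    (cliqueWhisker G p).Adj (inl u) (inr w) ↔ p u = w := by
  simp [cliqueWhisker]

@[simp] lemma cliqueWhisker_adj_inr_inl {u : V} {w : W} :
    (cliqueWhisker G p).Adj (inr w) (inl u) ↔ p u = w := by
  simp [cliqueWhisker]

@[simp] lemma not_cliqueWhisker_adj_inr_inr {w w' : W} :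
    ¬ (cliqueWhisker G p).Adj (inr w) (inr w') := by
  simp [cliqueWhisker]

lemma whiskerGraph_eq_cliqueWhisker_id : whiskerGraph G = cliqueWhisker G id := by
  ext (u | u) (v | v) <;> simp [whiskerGraph, cliqueWhisker]

lemma isIndep_cliqueWhisker_disjSum_iff [DecidableEq W] {L : Finset V} {M : Finset W} :
    IsIndep (cliqueWhisker G p) ↑(L.disjSum M) ↔ IsIndep G ↑L ∧ Disjoint (L.image p) M := by
  simp only [IsIndep, mem_coe, Sum.forall, inl_mem_disjSum, inr_mem_disjSum,
    cliqueWhisker_adj_inl_inl, cliqueWhisker_adj_inl_inr, cliqueWhisker_adj_inr_inl,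
    not_cliqueWhisker_adj_inr_inr, disjoint_left, mem_image]
  grind

lemma isIndep_cliqueWhisker_iff [DecidableEq W] {A : Finset (V ⊕ W)} :
    IsIndep (cliqueWhisker G p) ↑A ↔
      IsIndep G ↑A.toLeft ∧ Disjoint (A.toLeft.image p) A.toRight := by
  conv_lhs => rw [← toLeft_disjSum_toRight (u := A)]
  exact isIndep_cliqueWhisker_disjSum_iff G p

lemma isIndep_cliqueWhisker_sumAssoc_iff {U : Type*} (S : Set ((V ⊕ W) ⊕ U)) :
    IsIndep (cliqueWhisker G (inl ∘ p : V → W ⊕ U)) (Equiv.sumAssoc V W U '' S) ↔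
      IsIndep (cliqueWhisker G p) {x | inl x ∈ S} := by
  simp only [IsIndep, Set.forall_mem_image, Set.mem_ofPred_eq, Sum.forall,
    Equiv.sumAssoc_apply_inl_inl, Equiv.sumAssoc_apply_inl_inr, Equiv.sumAssoc_apply_inr,
    cliqueWhisker_adj_inl_inl, cliqueWhisker_adj_inl_inr, cliqueWhisker_adj_inr_inl,
    not_cliqueWhisker_adj_inr_inr, Function.comp_apply, inl.injEq, reduceCtorEq]
  grind

lemma natCard_isIndep_cliqueWhisker_join {U : Type*} (k : ℕ) :
    Nat.card {B : Finset ((V ⊕ W) ⊕ U) //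
        IsIndep (cliqueWhisker G p) {x | inl x ∈ B} ∧ #B = k} =
      Nat.card {A : Finset (V ⊕ (W ⊕ U)) //
        IsIndep (cliqueWhisker G (inl ∘ p : V → W ⊕ U)) ↑A ∧ #A = k} :=
  Nat.card_congr <| (Equiv.sumAssoc V W U).finsetCongr.subtypeEquiv fun B => by
    rw [Equiv.finsetCongr_apply, coe_map, card_map, Equiv.coe_toEmbedding,
      isIndep_cliqueWhisker_sumAssoc_iff]
    rfl

variable [Fintype V] [Fintype W] {p}

open scoped Classical in
lemma card_isIndep_cliqueWhisker_toLeft_eq (hp : ∀ u v, p u = p v → u ≠ v → G.Adj u v)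
    {k : ℕ} {L : Finset V} (hL : IsIndep G ↑L) (hk : #L ≤ k) :
    #{A ∈ {A : Finset (V ⊕ W) | IsIndep (cliqueWhisker G p) ↑A ∧ #A = k} | A.toLeft = L} =
      (Fintype.card W - #L).choose (k - #L) := by
  have hcard : #(L.image p)ᶜ = Fintype.card W - #L := by
    rw [card_compl, card_image_of_injOn (hL.injOn hp)]
  rw [← hcard, ← card_powersetCard]
  refine card_nbij' toRight (L.disjSum ·) ?_ ?_ ?_ ?_
  · intro A hA
    simp only [coe_filter, mem_filter, mem_univ, true_and, Set.mem_ofPred_eq,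
      isIndep_cliqueWhisker_iff] at hA
    obtain ⟨⟨⟨-, hdisj⟩, rfl⟩, rfl⟩ := hA
    simp only [mem_coe, mem_powersetCard, subset_compl_iff_disjoint_left]
    exact ⟨hdisj, by rw [← card_toLeft_add_card_toRight]; omega⟩
  · intro M hM
    simp only [mem_coe, mem_powersetCard, subset_compl_iff_disjoint_left] at hM
    simp only [coe_filter, mem_filter, mem_univ, true_and, Set.mem_ofPred_eq,
      isIndep_cliqueWhisker_iff, toLeft_disjSum, toRight_disjSum, card_disjSum]
    exact ⟨⟨⟨hL, hM.1⟩, by omega⟩, trivial⟩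
  · intro A hA
    simp only [coe_filter, mem_filter, mem_univ, true_and, Set.mem_ofPred_eq] at hA
    simp [← hA.2, toLeft_disjSum_toRight]
  · intro M _
    simp

theorem natCard_isIndep_cliqueWhisker (hp : ∀ u v, p u = p v → u ≠ v → G.Adj u v) (k : ℕ) :
    Nat.card {A : Finset (V ⊕ W) // IsIndep (cliqueWhisker G p) ↑A ∧ #A = k} =
      ∑ ℓ ∈ range (k + 1), Nat.card {A : Finset V // IsIndep G ↑A ∧ #A = ℓ} *
        (Fintype.card W - ℓ).choose (k - ℓ) := by
  classical
  simp only [Nat.card_eq_fintype_card, Fintype.card_subtype]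
  rw [card_eq_sum_card_fiberwise (f := toLeft)
    (t := {L ∈ {L : Finset V | IsIndep G ↑L} | #L ≤ k})]
  swap
  · intro A hA
    simp only [coe_filter, mem_filter, mem_univ, true_and, Set.mem_ofPred_eq,
      isIndep_cliqueWhisker_iff] at hA ⊢
    exact ⟨hA.1.1, hA.2 ▸ card_toLeft_le⟩
  rw [sum_congr rfl fun L hL => card_isIndep_cliqueWhisker_toLeft_eq G hp
    (mem_filter.1 (mem_filter.1 hL).1).2 (mem_filter.1 hL).2]
  refine (sum_filter_le_eq_sum_range _ card
    (fun ℓ => (Fintype.card W - ℓ).choose (k - ℓ)) k).trans ?_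
  simp only [filter_filter, smul_eq_mul]

end

theorem stmt3 {V : Type*} [Fintype V] {r : ℕ} (G : SimpleGraph V) (p : V → Fin r)
    (hclique : ∀ u v : V, p u = p v → u ≠ v → G.Adj u v)
    (hsurj : Function.Surjective p) (k : ℕ) :
    (Nat.card {A : Finset (V ⊕ V) //
        IsIndep (whiskerGraph G) (↑A : Set (V ⊕ V)) ∧ A.card = k} =
      ∑ ℓ ∈ Finset.range (k + 1),
        Nat.card {A : Finset V // IsIndep G (↑A : Set V) ∧ A.card = ℓ} *
          Nat.choose (Fintype.card V - ℓ) (k - ℓ)) ∧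
    Nat.card {A : Finset (V ⊕ V) //
        IsIndep (whiskerGraph G) (↑A : Set (V ⊕ V)) ∧ A.card = k} =
      Nat.card {B : Finset ((V ⊕ Fin r) ⊕ Fin (Fintype.card V - r)) //
        IsIndep (cliqueWhisker G p) {x | Sum.inl x ∈ B} ∧ B.card = k} := by
  have hcard : Fintype.card (Fin r ⊕ Fin (Fintype.card V - r)) = Fintype.card V := by
    have := Fintype.card_le_of_surjective p hsurj
    simp only [Fintype.card_sum, Fintype.card_fin] at this ⊢
    omega
  have hwhisker := natCard_isIndep_cliqueWhisker G (p := id) (fun u v huv hne => absurd huv hne) k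
  rw [← whiskerGraph_eq_cliqueWhisker_id] at hwhisker
  refine ⟨hwhisker, ?_⟩
  rw [hwhisker, natCard_isIndep_cliqueWhisker_join G p,
    natCard_isIndep_cliqueWhisker G (p := inl ∘ p) (fun u v h => hclique u v (inl_injective h)) k,
    hcard]
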